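/- arXiv:1611.08028 — 4 statements merged into one kernel-verified Lean document; each statement's English description precedes it below -/
import Mathlib

section
/- For every n ≥ 1, the Legendre polynomials P_n and ultraspherical polynomials C_n^{(3/2)} satisfy n·(P_n(x) + P_{n−1}(x)) = (1+x)·(C_{n−1}^{(3/2)}(x) − C_{n−2}^{(3/2)}(x)), where C_{−1}^{(3/2)} = 0. -/
open Real intervalIntegral

/-- Ultraspherical (Gegenbauer) polynomials via the three-term recurrence
`(n+1) C_{n+1} = 2(n+λ) x C_n − (n+2λ−1) C_{n−1}`, `C_0 = 1`, `C_{-1} = 0`. -/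
noncomputable def Geg (l : ℝ) : ℕ → ℝ → ℝ
  | 0, _ => 1
  | 1, x => 2 * l * x
  | (n + 2), x =>
      (2 * ((n : ℝ) + 1 + l) * x * Geg l (n + 1) x
        - ((n : ℝ) + 2 * l) * Geg l n x) / ((n : ℝ) + 2)

/-- Ultraspherical polynomials with integer index, zero for negative index. -/
noncomputable def GegZ (l : ℝ) (n : ℤ) (x : ℝ) : ℝ :=
  if 0 ≤ n then Geg l n.toNat x else 0

private lemma key (x : ℝ) : ∀ m : ℕ,
    ((m : ℝ) + 2) * Geg (1/2) (m+2) x = x * Geg (3/2) (m+1) x - Geg (3/2) m x ∧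
    ((m : ℝ) + 2) * Geg (1/2) (m+1) x = Geg (3/2) (m+1) x - x * Geg (3/2) m x := by
  intro m
  induction m with
  | zero =>
    constructor <;> · norm_num [Geg]; ring
  | succ k ih =>
    obtain ⟨h1, h2⟩ := ih
    have hk : ((k : ℝ) + 2) ≠ 0 := by positivity
    have hk1 : ((k : ℝ) + 1 + 2) ≠ 0 := by positivity
    have hP' : ((k:ℝ)+3) * Geg (1/2) (k+3) x
        = (2*(k:ℝ)+5)*x*Geg (1/2) (k+2) x - ((k:ℝ)+2)*Geg (1/2) (k+1) x := by
      rw [show Geg (1/2) (k+3) x =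
          (2 * (((k:ℕ)+1 : ℕ) + 1 + 1/2 : ℝ) * x * Geg (1/2) (k+2) x
            - (((k:ℕ)+1 : ℕ) + 2 * (1/2) : ℝ) * Geg (1/2) (k+1) x) / (((k:ℕ)+1 : ℕ) + 2 : ℝ)
          from by simp only [Geg]]
      push_cast
      rw [mul_comm, div_mul_eq_mul_div, div_eq_iff hk1]
      ring
    have hC' : ((k:ℝ)+2) * Geg (3/2) (k+2) x
        = (2*(k:ℝ)+5)*x*Geg (3/2) (k+1) x - ((k:ℝ)+3)*Geg (3/2) k x := by
      rw [show Geg (3/2) (k+2) x =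
          (2 * ((k : ℝ) + 1 + 3/2) * x * Geg (3/2) (k+1) x
            - ((k : ℝ) + 2 * (3/2)) * Geg (3/2) k x) / ((k : ℝ) + 2)
          from by simp only [Geg]]
      rw [mul_comm, div_mul_cancel₀ _ hk]
      ring
    constructor
    · have goal' : ((k:ℝ)+2) * (((k:ℝ)+3) * Geg (1/2) (k+3) x)
          = ((k:ℝ)+2) * (x * Geg (3/2) (k+2) x - Geg (3/2) (k+1) x) := by
        linear_combination ((k:ℝ)+2)*hP' - x*hC' + ((2*(k:ℝ)+5)*x)*h1 - ((k:ℝ)+2)*h2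
      have h := mul_left_cancel₀ hk goal'
      push_cast
      linear_combination h
    · have goal' : ((k:ℝ)+2) * (((k:ℝ)+3) * Geg (1/2) (k+2) x)
          = ((k:ℝ)+2) * (Geg (3/2) (k+2) x - x * Geg (3/2) (k+1) x) := by
        linear_combination -hC' + ((k:ℝ)+3)*h1
      have h := mul_left_cancel₀ hk goal'
      push_cast
      linear_combination h

theorem stmt5 (n : ℤ) (hn : 1 ≤ n) (x : ℝ) :
    (n : ℝ) * (GegZ (1/2) n x + GegZ (1/2) (n - 1) x) =
      (1 + x) * (GegZ (3/2) (n - 1) x - GegZ (3/2) (n - 2) x) := by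
  lift n to ℕ using (by linarith) with m hm
  match m, hn with
  | 1, _ =>
    norm_num [GegZ, Geg]
    ring
  | (k+2), _ =>
    obtain ⟨h1, h2⟩ := key x k
    have g1 : ((k+2:ℕ):ℤ) - 1 = ((k+1:ℕ):ℤ) := by push_cast; ring
    have g2 : ((k+2:ℕ):ℤ) - 2 = ((k:ℕ):ℤ) := by push_cast; ring
    rw [g1, g2]
    simp only [GegZ, Int.toNat_natCast, if_pos (Int.natCast_nonneg _)]
    push_cast
    linear_combination h1 + h2
end

section
/- For every n ≥ 0, the left-sided half-integral of the Legendre polynomial P_n satisfies (1/√π)·∫_{−1}^{x} P_n(t)/√(x−t) dt = (2√(1+x)/(√π(2n+1)))·(U_n(x) − U_{n−1}(x)) for all x ∈ (−1, 1], where U_{−1} = 0. -/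
/-!
Differentiating `t ↦ -2 √(x - t) p(t)` shows that
`∫_{-1}^x (p + 2 (t - x) p') / √(x - t) dt = 2 √(1 + x) p(-1)`. Applied to `p = P_{n+2} - P_n`,
which vanishes at `-1` and has derivative `(2n + 3) P_{n+1}`, Bonnet's recursion turns this into
the three-term recurrence `(2n + 5) F_{n+2} + (2n + 1) F_n = 2 (2n + 3) x F_{n+1}` for
`F_n = ∫_{-1}^x P_n / √(x - t) dt`. So `(2n + 1) F_n / (2 √(1 + x))` obeys the Chebyshev
recurrence, as does `U_n - U_{n-1}`, and the two agree for `n = 0, 1`.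
-/

open Real intervalIntegral

open Polynomial Set MeasureTheory

namespace Polynomial

noncomputable def legendre : ℕ → ℝ[X]
  | 0 => 1
  | 1 => X
  | n + 2 => C ((n : ℝ) + 2)⁻¹ *
      ((2 * (n : ℝ[X]) + 3) * X * legendre (n + 1) - ((n : ℝ[X]) + 1) * legendre n)

theorem mul_legendre_add_two (n : ℕ) :
    ((n : ℝ[X]) + 2) * legendre (n + 2) =
      (2 * (n : ℝ[X]) + 3) * X * legendre (n + 1) - ((n : ℝ[X]) + 1) * legendre n := by
  have h : (n : ℝ[X]) + 2 = C ((n : ℝ) + 2) := by simp [C_ofNat]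
  rw [legendre, ← mul_assoc, h, ← C_mul, mul_inv_cancel₀ (by positivity), C_1, one_mul]

theorem legendre_eval_neg_one (n : ℕ) : (legendre n).eval (-1) = (-1) ^ n := by
  induction n using Nat.twoStepInduction with
  | zero => simp [legendre]
  | one => simp [legendre]
  | more n ih₀ ih₁ =>
    have h := congrArg (eval (-1)) (mul_legendre_add_two n)
    simp only [eval_mul, eval_add, eval_sub, eval_natCast, eval_ofNat, eval_one, eval_X, ih₀,
      ih₁] at h
    refine mul_left_cancel₀ (by positivity : (n : ℝ) + 2 ≠ 0) ?_
    linear_combination h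

theorem derivative_legendre_add_two_sub_of {n : ℕ}
    (h : X * derivative (legendre (n + 1)) - derivative (legendre n) =
      ((n : ℝ[X]) + 1) * legendre (n + 1)) :
    derivative (legendre (n + 2)) - derivative (legendre n) =
      (2 * (n : ℝ[X]) + 3) * legendre (n + 1) := by
  have hrec := congrArg derivative (mul_legendre_add_two n)
  simp only [derivative_mul, derivative_sub, derivative_add, derivative_natCast, derivative_ofNat,
    derivative_one, derivative_X] at hrec
  have hn : (n : ℝ[X]) + 2 ≠ 0 := by exact_mod_cast (n + 1).succ_ne_zero
  refine mul_left_cancel₀ hn ?_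
  linear_combination hrec + (2 * (n : ℝ[X]) + 3) * h

theorem derivative_legendre_relations (n : ℕ) :
    X * derivative (legendre (n + 1)) - derivative (legendre n) =
        ((n : ℝ[X]) + 1) * legendre (n + 1) ∧
      derivative (legendre (n + 1)) - X * derivative (legendre n) =
        ((n : ℝ[X]) + 1) * legendre n := by
  induction n with
  | zero => constructor <;> simp [legendre]
  | succ n ih =>
    obtain ⟨hB, hC⟩ := ih
    have hD := derivative_legendre_add_two_sub_of hB
    push_cast
    constructor
    · linear_combination X * hD - hC - mul_legendre_add_two n
    · linear_combination hD - hB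

theorem derivative_legendre_add_two_sub (n : ℕ) :
    derivative (legendre (n + 2)) - derivative (legendre n) =
      (2 * (n : ℝ[X]) + 3) * legendre (n + 1) :=
  derivative_legendre_add_two_sub_of (derivative_legendre_relations n).1

end Polynomial

theorem mul_geg_add_two (l : ℝ) (n : ℕ) (x : ℝ) :
    ((n : ℝ) + 2) * Geg l (n + 2) x =
      2 * ((n : ℝ) + 1 + l) * x * Geg l (n + 1) x - ((n : ℝ) + 2 * l) * Geg l n x := by
  rw [Geg, mul_div_cancel₀ _ (by positivity)]

theorem geg_half_eq_legendre (n : ℕ) (x : ℝ) : Geg (1 / 2) n x = (legendre n).eval x := by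
  induction n using Nat.twoStepInduction with
  | zero => simp [Geg, legendre]
  | one => simp [Geg, legendre]
  | more n ih₀ ih₁ =>
    have h := congrArg (eval x) (mul_legendre_add_two n)
    simp only [eval_mul, eval_add, eval_sub, eval_natCast, eval_ofNat, eval_one, eval_X] at h
    refine mul_left_cancel₀ (by positivity : (n : ℝ) + 2 ≠ 0) ?_
    linear_combination
      mul_geg_add_two (1 / 2) n x + (2 * (n : ℝ) + 3) * x * ih₁ - ((n : ℝ) + 1) * ih₀ - h

theorem geg_one_eq_chebyshevU (n : ℕ) (x : ℝ) : Geg 1 n x = (Chebyshev.U ℝ n).eval x := by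
  induction n using Nat.twoStepInduction with
  | zero => simp [Geg]
  | one => simp [Geg]
  | more n ih₀ ih₁ =>
    have h := congrArg (eval x) (Chebyshev.U_add_two ℝ n)
    simp only [eval_mul, eval_sub, eval_ofNat, eval_X] at h
    push_cast at ih₁ ⊢
    refine mul_left_cancel₀ (by positivity : (n : ℝ) + 2 ≠ 0) ?_
    linear_combination
      mul_geg_add_two 1 n x + 2 * ((n : ℝ) + 2) * x * ih₁ - ((n : ℝ) + 2) * (ih₀ + h)

theorem gegZ_half_eq_legendre (n : ℕ) (x : ℝ) : GegZ (1 / 2) n x = (legendre n).eval x := by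
  rw [GegZ, if_pos n.cast_nonneg, Int.toNat_natCast, geg_half_eq_legendre]

theorem gegZ_one_eq_chebyshevU {n : ℤ} (hn : -1 ≤ n) (x : ℝ) :
    GegZ 1 n x = (Chebyshev.U ℝ n).eval x := by
  obtain rfl | hn := hn.eq_or_lt
  · simp [GegZ]
  · lift n to ℕ using by omega
    simp [GegZ, geg_one_eq_chebyshevU]

theorem Real.rpow_neg_one_half (y : ℝ) : y ^ (-(1 / 2) : ℝ) = (√y)⁻¹ := by
  rcases le_or_gt 0 y with hy | hy
  · rw [rpow_neg hy, sqrt_eq_rpow]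
  · rw [rpow_def_of_neg hy, sqrt_eq_zero'.2 hy.le, inv_zero,
      show -(1 / 2) * π = -(π / 2) by ring, cos_neg, cos_pi_div_two, mul_zero]

theorem intervalIntegrable_div_sqrt_sub {g : ℝ → ℝ} {a x : ℝ}
    (hg : ContinuousOn g (uIcc a x)) :
    IntervalIntegrable (fun t => g t / √(x - t)) volume a x := by
  have h := (intervalIntegrable_rpow' (r := -(1 / 2)) (by norm_num)
    (a := x - a) (b := 0)).comp_sub_left x
  simp only [sub_sub_cancel, sub_zero, rpow_neg_one_half] at h
  simpa only [div_eq_mul_inv] using h.continuousOn_mul hg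

theorem integral_add_two_mul_deriv_div_sqrt_sub {f f' : ℝ → ℝ} {a x : ℝ} (hax : a ≤ x)
    (hf : ContinuousOn f (Icc a x)) (hderiv : ∀ t ∈ Ioo a x, HasDerivAt f (f' t) t)
    (hf' : ContinuousOn f' (Icc a x)) :
    ∫ t in a..x, (f t + 2 * (t - x) * f' t) / √(x - t) = 2 * √(x - a) * f a := by
  have hanti : ∀ t ∈ Ioo a x, HasDerivAt (fun t => -2 * √(x - t) * f t)
      ((f t + 2 * (t - x) * f' t) / √(x - t)) t := by
    intro t ht
    have hpos : 0 < x - t := sub_pos.2 ht.2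
    have hsqrt : HasDerivAt (fun t => √(x - t)) (1 / (2 * √(x - t)) * (-1)) t :=
      (hasDerivAt_sqrt hpos.ne').comp t ((hasDerivAt_id t).const_sub x)
    refine ((hsqrt.const_mul (-2)).mul (hderiv t ht)).congr_deriv ?_
    have hsq := mul_self_sqrt hpos.le
    field_simp
    linear_combination (-2 * f' t) * hsq
  have hcont : ContinuousOn (fun t => -2 * √(x - t) * f t) (Icc a x) :=
    ((continuous_const.mul (continuous_const.sub continuous_id).sqrt).continuousOn).mul hf
  have hint : IntervalIntegrable (fun t => (f t + 2 * (t - x) * f' t) / √(x - t))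
      volume a x := by
    refine intervalIntegrable_div_sqrt_sub ?_
    rw [uIcc_of_le hax]
    exact hf.add ((continuousOn_const.mul (continuousOn_id.sub continuousOn_const)).mul hf')
  rw [integral_eq_sub_of_hasDerivAt_of_le hax hcont hanti hint]
  simp

/-- `∫_{-1}^x p(t) / √(x - t) dt`, that is `√π` times the Riemann–Liouville half-integral
`Q^{1/2} p (x)`. -/
noncomputable def halfIntegral (x : ℝ) : ℝ[X] →ₗ[ℝ] ℝ where
  toFun p := ∫ t in (-1 : ℝ)..x, p.eval t / √(x - t)
  map_add' p q := by
    simp only [eval_add, add_div]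
    exact integral_add (intervalIntegrable_div_sqrt_sub p.continuousOn)
      (intervalIntegrable_div_sqrt_sub q.continuousOn)
  map_smul' c p := by simp [mul_div_assoc]

theorem halfIntegral_apply (x : ℝ) (p : ℝ[X]) :
    halfIntegral x p = ∫ t in (-1 : ℝ)..x, p.eval t / √(x - t) := rfl

theorem halfIntegral_C_mul (x a : ℝ) (p : ℝ[X]) :
    halfIntegral x (C a * p) = a * halfIntegral x p := by
  rw [C_mul', map_smul, smul_eq_mul]

theorem halfIntegral_add_two_mul_derivative {x : ℝ} (hx : -1 ≤ x) (p : ℝ[X]) :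
    halfIntegral x (p + 2 * (X - C x) * derivative p) = 2 * √(1 + x) * p.eval (-1) := by
  have h := integral_add_two_mul_deriv_div_sqrt_sub hx p.continuousOn (fun t _ => p.hasDerivAt t)
    (derivative p).continuousOn
  rw [sub_neg_eq_add, add_comm x] at h
  simpa [halfIntegral_apply] using h

theorem halfIntegral_one {x : ℝ} (hx : -1 ≤ x) : halfIntegral x 1 = 2 * √(1 + x) := by
  simpa using halfIntegral_add_two_mul_derivative hx 1

theorem three_mul_halfIntegral_X {x : ℝ} (hx : -1 ≤ x) :
    3 * halfIntegral x X = 2 * √(1 + x) * (2 * x - 1) := by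
  have h := halfIntegral_add_two_mul_derivative hx X
  rw [show X + 2 * (X - C x) * derivative X = C 3 * X - C (2 * x) * 1 by simp [C_ofNat]; ring,
    map_sub, halfIntegral_C_mul, halfIntegral_C_mul, halfIntegral_one hx, eval_X] at h
  linear_combination h

theorem halfIntegral_legendre_add_two {x : ℝ} (hx : -1 ≤ x) (n : ℕ) :
    (2 * n + 5) * halfIntegral x (legendre (n + 2)) + (2 * n + 1) * halfIntegral x (legendre n) =
      2 * (2 * n + 3) * x * halfIntegral x (legendre (n + 1)) := by
  have h := halfIntegral_add_two_mul_derivative hx (legendre (n + 2) - legendre n)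
  have hq : legendre (n + 2) - legendre n +
        2 * (X - C x) * derivative (legendre (n + 2) - legendre n) =
      C (2 * (n : ℝ) + 5) * legendre (n + 2) + C (2 * (n : ℝ) + 1) * legendre n
        - C (2 * (2 * (n : ℝ) + 3) * x) * legendre (n + 1) := by
    rw [derivative_sub, derivative_legendre_add_two_sub]
    simp only [map_add, map_mul, map_natCast, map_ofNat, map_one]
    linear_combination -2 * mul_legendre_add_two n
  rw [hq, map_sub, map_add, halfIntegral_C_mul, halfIntegral_C_mul, halfIntegral_C_mul, eval_sub,
    legendre_eval_neg_one, legendre_eval_neg_one] at h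
  linear_combination h

theorem mul_halfIntegral_legendre {x : ℝ} (hx : -1 ≤ x) (n : ℕ) :
    (2 * n + 1) * halfIntegral x (legendre n) =
      2 * √(1 + x) * ((Chebyshev.U ℝ n).eval x - (Chebyshev.U ℝ (n - 1)).eval x) := by
  induction n using Nat.twoStepInduction with
  | zero => simp [legendre, halfIntegral_one hx]
  | one =>
    simp only [legendre, Nat.cast_one, sub_self, Chebyshev.U_one, Chebyshev.U_zero]
    simp only [eval_mul, eval_ofNat, eval_X, eval_one]
    linear_combination three_mul_halfIntegral_X hx
  | more n ih₀ ih₁ =>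
    have hU₂ := congrArg (eval x) (Chebyshev.U_add_two ℝ n)
    have hU₀ := congrArg (eval x) (Chebyshev.U_sub_one ℝ n)
    simp only [eval_mul, eval_sub, eval_ofNat, eval_X] at hU₂ hU₀
    push_cast at ih₁ ⊢
    rw [add_sub_cancel_right] at ih₁
    rw [show (n : ℤ) + 2 - 1 = n + 1 by ring]
    linear_combination
      halfIntegral_legendre_add_two hx n + 2 * x * ih₁ - ih₀ + 2 * √(1 + x) * (hU₀ - hU₂)

theorem stmt7 (n : ℤ) (hn : 0 ≤ n) (x : ℝ) (hx : x ∈ Set.Ioc (-1 : ℝ) 1) :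
    (1 / Real.sqrt π) * ∫ t in (-1 : ℝ)..x, GegZ (1/2) n t / Real.sqrt (x - t) =
      2 * Real.sqrt (1 + x) / (Real.sqrt π * (2 * (n : ℝ) + 1))
        * (GegZ 1 n x - GegZ 1 (n - 1) x) := by
  lift n to ℕ using hn
  simp only [gegZ_half_eq_legendre, ← halfIntegral_apply]
  rw [gegZ_one_eq_chebyshevU (by omega), gegZ_one_eq_chebyshevU (by omega)]
  have hπ : √π ≠ 0 := (sqrt_pos.2 pi_pos).ne'
  field_simp
  linear_combination mul_halfIntegral_legendre hx.1.le n
end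

section
/- For every λ > 0 and n ≥ 0, the half-integral of (1+t)^{λ−1/2} C_n^{(λ)}(t) satisfies (1/√π)∫_{−1}^x (1+t)^{λ−1/2} C_n^{(λ)}(t) (x−t)^{−1/2} dt = (Γ(λ+1/2)/(Γ(λ)(n+λ)))·(1+x)^{λ}·(C_n^{(λ+1/2)}(x) − C_{n−1}^{(λ+1/2)}(x)) for all x ∈ (−1,1], where C_{−1}^{(λ+1/2)} = 0. -/
/-!
In powers of `1 + x`, `C_n^{(λ)}(x) = (-1)^n (2λ)_n / n! · ₂F₁(-n, n + 2λ; λ + 1/2; (1 + x) / 2)`.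
On each monomial the half-integral is Euler's Beta integral,
`∫_{-1}^x (1 + t)^{λ+k-1/2} (x - t)^{-1/2} dt = √π Γ(λ + k + 1/2) / Γ(λ + k + 1) · (1 + x)^{λ+k}`,
and the resulting coefficients are, up to the factor `Γ(λ + 1/2) / (Γ(λ) (n + λ))`, the differences
of the coefficients of `C_n^{(λ + 1/2)}` and `C_{n-1}^{(λ + 1/2)}`.
-/
open Real intervalIntegral

open Finset

theorem integral_rpow_mul_one_sub_rpow {a b : ℝ} (ha : 0 < a) (hb : 0 < b) :
    ∫ s in (0 : ℝ)..1, s ^ (a - 1) * (1 - s) ^ (b - 1) = Gamma a * Gamma b / Gamma (a + b) := by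
  have hc := Complex.betaIntegral_eq_Gamma_mul_div a b (by simpa) (by simpa)
  rw [Complex.betaIntegral, ← Complex.ofReal_add, Complex.Gamma_ofReal, Complex.Gamma_ofReal,
    Complex.Gamma_ofReal] at hc
  suffices h : ((∫ s in (0 : ℝ)..1, s ^ (a - 1) * (1 - s) ^ (b - 1) : ℝ) : ℂ) =
      ∫ s in (0 : ℝ)..1, (s : ℂ) ^ ((a : ℂ) - 1) * (1 - (s : ℂ)) ^ ((b : ℂ) - 1) by
    exact_mod_cast h.trans hc
  rw [← integral_ofReal]
  refine integral_congr fun s hs ↦ ?_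
  rw [Set.uIcc_of_le zero_le_one] at hs
  simp only [Complex.ofReal_mul, Complex.ofReal_cpow hs.1,
    Complex.ofReal_cpow (sub_nonneg.2 hs.2), Complex.ofReal_sub, Complex.ofReal_one]

theorem integral_sub_rpow_mul_sub_rpow {a b c x : ℝ} (ha : 0 < a) (hb : 0 < b) (hcx : c < x) :
    ∫ t in c..x, (t - c) ^ (a - 1) * (x - t) ^ (b - 1) =
      Gamma a * Gamma b / Gamma (a + b) * (x - c) ^ (a + b - 1) := by
  have hd : 0 < x - c := sub_pos.2 hcx
  have hsub := smul_integral_comp_mul_add (a := 0) (b := 1)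
    (fun t ↦ (t - c) ^ (a - 1) * (x - t) ^ (b - 1)) (x - c) c
  simp only [mul_zero, zero_add, mul_one, sub_add_cancel, smul_eq_mul] at hsub
  rw [← hsub, ← integral_rpow_mul_one_sub_rpow ha hb, ← integral_const_mul, ← integral_mul_const]
  refine integral_congr fun s hs ↦ ?_
  rw [Set.uIcc_of_le zero_le_one] at hs
  rw [show (x - c) * s + c - c = (x - c) * s by ring,
    show x - ((x - c) * s + c) = (x - c) * (1 - s) by ring,
    mul_rpow hd.le hs.1, mul_rpow hd.le (sub_nonneg.2 hs.2),
    show a + b - 1 = 1 + (a - 1) + (b - 1) by ring, rpow_add hd, rpow_add hd, rpow_one]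
  ring

theorem integral_one_add_rpow_div_sqrt {a x : ℝ} (ha : 0 < a) (hx : -1 < x) :
    ∫ t in (-1 : ℝ)..x, (1 + t) ^ (a - 1) / √(x - t) =
      Gamma a * √π / Gamma (a + 1/2) * (1 + x) ^ (a - 1/2) := by
  have h := integral_sub_rpow_mul_sub_rpow ha one_half_pos hx
  rw [Gamma_one_half_eq, sub_neg_eq_add, add_comm x, show a + 1/2 - 1 = a - 1/2 by ring] at h
  rw [← h]
  refine integral_congr fun t ht ↦ ?_
  rw [Set.uIcc_of_le hx.le] at ht
  rw [sub_neg_eq_add, add_comm t, div_eq_mul_inv, sqrt_eq_rpow, ← rpow_neg (sub_nonneg.2 ht.2)]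
  norm_num

theorem intervalIntegrable_one_add_rpow_div_sqrt {a x : ℝ} (ha : 0 < a) (hx : -1 < x) :
    IntervalIntegrable (fun t ↦ (1 + t) ^ (a - 1) / √(x - t)) MeasureTheory.volume (-1) x := by
  refine intervalIntegrable_of_integral_ne_zero ?_
  rw [integral_one_add_rpow_div_sqrt ha hx]
  have : 0 < 1 + x := by linarith
  positivity

/-- The coefficient of `(1 + x) ^ k` in `Geg l n x`. The factor `(Gamma (n - k + 1))⁻¹` is
`1 / (n - k)!` for `k ≤ n` and `0` for `k > n`, as `Gamma` vanishes at nonpositive integers. -/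
noncomputable def gegCoeff (l : ℝ) (n k : ℕ) : ℝ :=
  (-1) ^ (n + k) * Gamma (2 * l + n + k) * (Gamma ((n : ℝ) - k + 1))⁻¹ * Gamma (l + 1/2) /
    (Gamma (2 * l) * Gamma (l + 1/2 + k) * k.factorial * 2 ^ k)

theorem inv_Gamma_eq_self_mul_inv_Gamma_add_one (s : ℝ) :
    (Gamma s)⁻¹ = s * (Gamma (s + 1))⁻¹ := by
  rcases ne_or_eq s 0 with hs | rfl
  · rw [Gamma_add_one hs, mul_inv, mul_inv_cancel_left₀ hs]
  · rw [zero_add, Gamma_zero, inv_zero, zero_mul]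

theorem gegCoeff_of_lt {l : ℝ} {n k : ℕ} (h : n < k) : gegCoeff l n k = 0 := by
  obtain ⟨d, rfl⟩ := Nat.exists_eq_add_of_lt h
  rw [gegCoeff, show ((n : ℝ) - (n + d + 1 : ℕ) + 1) = -d by push_cast; ring,
    Gamma_neg_nat_eq_zero]
  simp

theorem gegCoeff_succ_recurrence {l : ℝ} (hl : 0 < l) (n k : ℕ) :
    (n + 2) * gegCoeff l (n + 2) (k + 1) + 2 * (n + 1 + l) * gegCoeff l (n + 1) (k + 1)
      + (n + 2 * l) * gegCoeff l n (k + 1) = 2 * (n + 1 + l) * gegCoeff l (n + 1) k := by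
  -- Everything is expressed through `Gamma G` and `(Gamma (r + 2))⁻¹`; the recurrence for `Γ⁻¹`
  -- also holds at the poles, so no case distinction on `k ≤ n` is needed.
  set G : ℝ := 2 * l + n + k + 1
  set r : ℝ := n - k
  have hG : 0 < G := by positivity
  have e2 : Gamma (2 * l + ↑(n + 2) + ↑(k + 1)) = (G + 1) * G * Gamma G := by
    rw [show 2 * l + ↑(n + 2) + ↑(k + 1) = G + 1 + 1 by push_cast; ring,
      Gamma_add_one (by positivity), Gamma_add_one hG.ne', mul_assoc]
  have e1 : Gamma (2 * l + ↑(n + 1) + ↑(k + 1)) = G * Gamma G := by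
    rw [show 2 * l + ↑(n + 1) + ↑(k + 1) = G + 1 by push_cast; ring, Gamma_add_one hG.ne']
  have e0 : Gamma (2 * l + ↑n + ↑(k + 1)) = Gamma G := by congr 1; push_cast; ring
  have e0' : Gamma (2 * l + ↑(n + 1) + ↑k) = Gamma G := by congr 1; push_cast; ring
  have w : Gamma (l + 1/2 + ↑(k + 1)) = (l + 1/2 + k) * Gamma (l + 1/2 + k) := by
    rw [Nat.cast_succ, ← add_assoc, Gamma_add_one (by positivity)]
  have i2 : Gamma (↑(n + 2) - ↑(k + 1) + 1) = Gamma (r + 2) := by congr 1; push_cast; ring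
  have i2' : Gamma (↑(n + 1) - ↑k + 1) = Gamma (r + 2) := by congr 1; push_cast; ring
  have i1 : (Gamma (↑(n + 1) - ↑(k + 1) + 1))⁻¹ = (r + 1) * (Gamma (r + 2))⁻¹ := by
    rw [show (↑(n + 1) - ↑(k + 1) + 1 : ℝ) = r + 1 by push_cast; ring,
      inv_Gamma_eq_self_mul_inv_Gamma_add_one, add_assoc, one_add_one_eq_two]
  have i0 : (Gamma (↑n - ↑(k + 1) + 1))⁻¹ = r * (r + 1) * (Gamma (r + 2))⁻¹ := by
    rw [show (↑n - ↑(k + 1) + 1 : ℝ) = r by push_cast; ring,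
      inv_Gamma_eq_self_mul_inv_Gamma_add_one, inv_Gamma_eq_self_mul_inv_Gamma_add_one, add_assoc,
      one_add_one_eq_two, mul_assoc]
  simp only [gegCoeff, e2, e1, e0, e0', w, i2, i2', i1, i0, Nat.factorial_succ, pow_succ]
  generalize (Gamma (r + 2))⁻¹ = ρ
  have : Gamma G ≠ 0 := (Gamma_pos_of_pos hG).ne'
  field_simp
  simp only [G, r]
  push_cast
  ring

theorem gegCoeff_zero_recurrence {l : ℝ} (hl : 0 < l) (n : ℕ) :
    (n + 2) * gegCoeff l (n + 2) 0 + 2 * (n + 1 + l) * gegCoeff l (n + 1) 0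
      + (n + 2 * l) * gegCoeff l n 0 = 0 := by
  have hG : 0 < 2 * l + n := by positivity
  have e2 : Gamma (2 * l + ↑(n + 2)) =
      (2 * l + n + 1) * ((2 * l + n) * Gamma (2 * l + n)) := by
    rw [show 2 * l + ↑(n + 2) = 2 * l + n + 1 + 1 by push_cast; ring,
      Gamma_add_one (by positivity), Gamma_add_one hG.ne']
  have e1 : Gamma (2 * l + ↑(n + 1)) = (2 * l + n) * Gamma (2 * l + n) := by
    rw [Nat.cast_succ, ← add_assoc, Gamma_add_one hG.ne']
  have i2 : Gamma (↑(n + 2) + 1) = Gamma (n + 3) := by congr 1; push_cast; ring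
  have i1 : (Gamma (↑(n + 1) + 1))⁻¹ = (n + 2) * (Gamma (n + 3))⁻¹ := by
    rw [inv_Gamma_eq_self_mul_inv_Gamma_add_one]; push_cast; ring_nf
  have i0 : (Gamma (↑n + 1))⁻¹ = (n + 1) * (n + 2) * (Gamma (n + 3))⁻¹ := by
    rw [inv_Gamma_eq_self_mul_inv_Gamma_add_one, inv_Gamma_eq_self_mul_inv_Gamma_add_one]
    ring_nf
  simp only [gegCoeff, Nat.cast_zero, add_zero, sub_zero]
  rw [e2, e1, i2, i1, i0]
  generalize (Gamma (n + 3))⁻¹ = ρ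
  field_simp
  ring

theorem gegCoeff_zero_zero {l : ℝ} (hl : 0 < l) : gegCoeff l 0 0 = 1 := by
  have : Gamma (2 * l) ≠ 0 := (Gamma_pos_of_pos (by positivity)).ne'
  have : Gamma (l + 1/2) ≠ 0 := (Gamma_pos_of_pos (by positivity)).ne'
  simp only [gegCoeff, Nat.cast_zero, add_zero, sub_zero, zero_add, Gamma_one,
    Nat.factorial_zero, Nat.cast_one]
  field_simp

theorem gegCoeff_one_zero {l : ℝ} (hl : 0 < l) : gegCoeff l 1 0 = -(2 * l) := by
  have : Gamma (2 * l) ≠ 0 := (Gamma_pos_of_pos (by positivity)).ne'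
  have : Gamma (l + 1/2) ≠ 0 := (Gamma_pos_of_pos (by positivity)).ne'
  simp only [gegCoeff, Nat.cast_zero, Nat.cast_one, add_zero, sub_zero, one_add_one_eq_two,
    Gamma_two, Gamma_add_one (by positivity : 2 * l ≠ 0)]
  field_simp
  ring

theorem gegCoeff_one_one {l : ℝ} (hl : 0 < l) : gegCoeff l 1 1 = 2 * l := by
  have : Gamma (2 * l) ≠ 0 := (Gamma_pos_of_pos (by positivity)).ne'
  have : Gamma (l + 1/2) ≠ 0 := (Gamma_pos_of_pos (by positivity)).ne'
  simp only [gegCoeff, Nat.cast_one, sub_self, zero_add, Gamma_one,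
    Gamma_add_one (by positivity : 2 * l + 1 ≠ 0), Gamma_add_one (by positivity : 2 * l ≠ 0),
    Gamma_add_one (by positivity : l + 1/2 ≠ 0)]
  field_simp
  ring

theorem sum_range_gegCoeff_mul_of_lt {l : ℝ} {n N : ℕ} (h : n < N) (y : ℝ) :
    ∑ k ∈ range N, gegCoeff l n k * y ^ k = ∑ k ∈ range (n + 1), gegCoeff l n k * y ^ k :=
  (sum_subset (range_subset_range.2 h) fun k _ hk ↦ by
    rw [gegCoeff_of_lt (by simpa using hk), zero_mul]).symm

theorem sum_gegCoeff_recurrence {l : ℝ} (hl : 0 < l) (n : ℕ) (y : ℝ) :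
    (n + 2) * ∑ k ∈ range (n + 3), gegCoeff l (n + 2) k * y ^ k
      + 2 * (n + 1 + l) * ∑ k ∈ range (n + 3), gegCoeff l (n + 1) k * y ^ k
      + (n + 2 * l) * ∑ k ∈ range (n + 3), gegCoeff l n k * y ^ k
      = 2 * (n + 1 + l) * y * ∑ k ∈ range (n + 2), gegCoeff l (n + 1) k * y ^ k := by
  rw [mul_sum, mul_sum, mul_sum, mul_sum, ← sum_add_distrib, ← sum_add_distrib, sum_range_succ']
  simp only [pow_zero, mul_one]
  rw [gegCoeff_zero_recurrence hl, add_zero]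
  refine sum_congr rfl fun k _ ↦ ?_
  linear_combination y ^ (k + 1) * gegCoeff_succ_recurrence hl n k

theorem Geg_eq_sum_gegCoeff {l : ℝ} (hl : 0 < l) (n : ℕ) (x : ℝ) :
    Geg l n x = ∑ k ∈ range (n + 1), gegCoeff l n k * (1 + x) ^ k := by
  induction n using Nat.twoStepInduction with
  | zero => simp [Geg, gegCoeff_zero_zero hl]
  | one => simp [Geg, sum_range_succ, gegCoeff_one_zero hl, gegCoeff_one_one hl]; ring
  | more n ih0 ih1 =>
    have h := sum_gegCoeff_recurrence hl n (1 + x)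
    rw [sum_range_gegCoeff_mul_of_lt (by omega : n + 1 < n + 3),
      sum_range_gegCoeff_mul_of_lt (by omega : n < n + 3), ← ih0, ← ih1] at h
    rw [Geg, div_eq_iff (by positivity)]
    linear_combination -h

theorem gegCoeff_mul_Gamma_div_eq {l : ℝ} (hl : 0 < l) (p k : ℕ) :
    gegCoeff l (p + 1) k * (Gamma (l + 1/2 + k) / Gamma (l + 1 + k)) =
      Gamma (l + 1/2) / (Gamma l * (p + 1 + l)) *
        (gegCoeff (l + 1/2) (p + 1) k - gegCoeff (l + 1/2) p k) := by
  set G : ℝ := 2 * l + p + k + 1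
  have hG : 0 < G := by positivity
  have e1 : Gamma (2 * (l + 1/2) + ↑(p + 1) + ↑k) = G * Gamma G := by
    rw [show 2 * (l + 1/2) + ↑(p + 1) + ↑k = G + 1 by push_cast; ring, Gamma_add_one hG.ne']
  have e0 : Gamma (2 * (l + 1/2) + ↑p + ↑k) = Gamma G := by congr 1; ring
  have e0' : Gamma (2 * l + ↑(p + 1) + ↑k) = Gamma G := by congr 1; push_cast; ring
  have d : Gamma (2 * (l + 1/2)) = 2 * l * Gamma (2 * l) := by
    rw [show 2 * (l + 1/2) = 2 * l + 1 by ring, Gamma_add_one (by positivity)]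
  have h : Gamma (l + 1/2 + 1/2) = l * Gamma l := by
    rw [show l + 1/2 + 1/2 = l + 1 by ring, Gamma_add_one hl.ne']
  have hk : Gamma (l + 1/2 + 1/2 + k) = Gamma (l + 1 + k) := by congr 1; ring
  have i : (Gamma (↑p - ↑k + 1))⁻¹ = (p - k + 1) * (Gamma (↑(p + 1) - ↑k + 1))⁻¹ := by
    rw [inv_Gamma_eq_self_mul_inv_Gamma_add_one]; push_cast; ring_nf
  simp only [gegCoeff, e1, e0, e0', d, h, hk, i]
  generalize (Gamma (↑(p + 1) - ↑k + 1))⁻¹ = ρ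
  have : Gamma G ≠ 0 := (Gamma_pos_of_pos hG).ne'
  have : Gamma (l + 1 + k) ≠ 0 := (Gamma_pos_of_pos (by positivity)).ne'
  field_simp
  simp only [G]
  ring

theorem GegZ_natCast (l : ℝ) (n : ℕ) (x : ℝ) : GegZ l n x = Geg l n x := by
  simp [GegZ]

theorem sum_gegCoeff_mul_Gamma_div {l : ℝ} (hl : 0 < l) (n : ℕ) (x : ℝ) :
    ∑ k ∈ range (n + 1),
        gegCoeff l n k * (Gamma (l + 1/2 + k) / Gamma (l + 1 + k)) * (1 + x) ^ k =
      Gamma (l + 1/2) / (Gamma l * (n + l)) *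
        (GegZ (l + 1/2) n x - GegZ (l + 1/2) (n - 1) x) := by
  have hl' : 0 < l + 1/2 := by positivity
  cases n with
  | zero =>
    have : Gamma l ≠ 0 := (Gamma_pos_of_pos hl).ne'
    simp [GegZ, Geg, gegCoeff_zero_zero hl, Gamma_add_one hl.ne']
    field_simp
  | succ p =>
    rw [show ((p + 1 : ℕ) : ℤ) - 1 = p by push_cast; ring, GegZ_natCast, GegZ_natCast,
      Geg_eq_sum_gegCoeff hl', Geg_eq_sum_gegCoeff hl',
      ← sum_range_gegCoeff_mul_of_lt (n := p) (N := p + 2) (by omega), ← sum_sub_distrib, mul_sum]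
    refine sum_congr rfl fun k _ ↦ ?_
    rw [gegCoeff_mul_Gamma_div_eq hl]
    push_cast
    ring

theorem integral_one_add_rpow_mul_Geg_div_sqrt {l x : ℝ} (hl : 0 < l) (hx : -1 < x) (n : ℕ) :
    ∫ t in (-1 : ℝ)..x, (1 + t) ^ (l - 1/2) * Geg l n t / √(x - t) =
      √π * (1 + x) ^ l * ∑ k ∈ range (n + 1),
        gegCoeff l n k * (Gamma (l + 1/2 + k) / Gamma (l + 1 + k)) * (1 + x) ^ k := by
  have hexpand : ∫ t in (-1 : ℝ)..x, (1 + t) ^ (l - 1/2) * Geg l n t / √(x - t) =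
      ∫ t in (-1 : ℝ)..x, ∑ k ∈ range (n + 1),
        gegCoeff l n k * ((1 + t) ^ (l + 1/2 + k - 1) / √(x - t)) := by
    refine integral_congr_ae (Filter.Eventually.of_forall fun t ht ↦ ?_)
    rw [Set.uIoc_of_le hx.le] at ht
    rw [Geg_eq_sum_gegCoeff hl, mul_sum, sum_div]
    refine sum_congr rfl fun k _ ↦ ?_
    rw [show l + 1/2 + k - 1 = l - 1/2 + k by ring, rpow_add (by linarith [ht.1]), rpow_natCast]
    ring
  rw [hexpand, integral_finsetSum fun k _ ↦
    (intervalIntegrable_one_add_rpow_div_sqrt (by positivity) hx).const_mul _, mul_sum]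
  refine sum_congr rfl fun k _ ↦ ?_
  rw [integral_const_mul, integral_one_add_rpow_div_sqrt (by positivity) hx,
    show l + 1/2 + k + 1/2 = l + 1 + k by ring, show l + 1/2 + k - 1/2 = l + k by ring,
    rpow_add (by linarith), rpow_natCast]
  ring

theorem stmt9 (l : ℝ) (hl : 0 < l) (n : ℤ) (hn : 0 ≤ n) (x : ℝ)
    (hx : x ∈ Set.Ioc (-1 : ℝ) 1) :
    (1 / Real.sqrt π) *
        ∫ t in (-1 : ℝ)..x, (1 + t) ^ (l - 1/2) * GegZ l n t / Real.sqrt (x - t) =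
      Real.Gamma (l + 1/2) / (Real.Gamma l * ((n : ℝ) + l)) * (1 + x) ^ l
        * (GegZ (l + 1/2) n x - GegZ (l + 1/2) (n - 1) x) := by
  lift n to ℕ using hn
  simp_rw [GegZ_natCast l n]
  rw [integral_one_add_rpow_mul_Geg_div_sqrt hl hx.1, sum_gegCoeff_mul_Gamma_div hl,
    Int.cast_natCast]
  have : √π ≠ 0 := by positivity
  field_simp
end

section
/- The function u(x) = e^{1+x}·erfc(√(1+x)) satisfies u(x) + D^{1/2}u(x) = 1/(√π·√(1+x)) for all x ∈ (−1,1), where D^{1/2} is the left-sided Riemann–Liouville half-derivative based at −1. -/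
/-! With `R = √(1 + y)`, the substitution `t = y - τ²` turns the half-integral
`(1/√π) ∫_{-1}^y u(t) (y - t)^{-1/2} dt` into
`(2/√π) ∫_0^R e^{R² - τ²} erfc √(R² - τ²) dτ`.
Writing `erfc z = 1 - (2/√π) ∫_0^z e^{-s²} ds`, what remains is the Gaussian mass
`π/4 (1 - e^{-R²})` of the quarter disk of radius `R`, computed in polar coordinates.
Hence the half-integral of `u` equals `1 - u` on `[-1, ∞)`, and differentiating gives the
claim. -/

open Real intervalIntegral

/-- The complementary error function `erfc z = (2/√π) ∫_z^∞ e^{−s²} ds`. -/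
noncomputable def erfc (z : ℝ) : ℝ :=
  (2 / Real.sqrt π) * ∫ s in Set.Ioi z, Real.exp (-s ^ 2)

open MeasureTheory Set

lemma integrable_exp_neg_sq : Integrable fun s : ℝ => exp (-s ^ 2) := by
  simpa using integrable_exp_neg_mul_sq one_pos

lemma erfc_eq_one_sub_integral (z : ℝ) :
    erfc z = 1 - 2 / √π * ∫ s in (0 : ℝ)..z, exp (-s ^ 2) := by
  have hhalf : ∫ s in Ioi (0 : ℝ), exp (-s ^ 2) = √π / 2 := by
    simpa using integral_gaussian_Ioi 1
  have hsplit := intervalIntegral.integral_Ioi_sub_Ioi' (a := 0) (b := z)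
    integrable_exp_neg_sq.integrableOn integrable_exp_neg_sq.integrableOn
  rw [erfc, ← hsplit, hhalf]
  field_simp
  ring

lemma continuous_integral_exp_neg_sq :
    Continuous fun z : ℝ => ∫ s in (0 : ℝ)..z, exp (-s ^ 2) :=
  intervalIntegral.continuous_primitive (fun _ _ => integrable_exp_neg_sq.intervalIntegrable) 0

lemma hasDerivAt_erfc (z : ℝ) : HasDerivAt erfc (-(2 / √π) * exp (-z ^ 2)) z := by
  have hprim : HasDerivAt (fun w => ∫ s in (0 : ℝ)..w, exp (-s ^ 2)) (exp (-z ^ 2)) z :=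
    intervalIntegral.integral_hasDerivAt_right integrable_exp_neg_sq.intervalIntegrable
      integrable_exp_neg_sq.aestronglyMeasurable.stronglyMeasurableAtFilter
      (by fun_prop : Continuous fun s : ℝ => exp (-s ^ 2)).continuousAt
  rw [funext erfc_eq_one_sub_integral]
  simpa using (hprim.const_mul (2 / √π)).const_sub 1

lemma integral_div_sqrt_sub_eq (g : ℝ → ℝ) {a y : ℝ} (hay : a ≤ y) :
    ∫ t in a..y, g t / √(y - t) = 2 * ∫ τ in (0 : ℝ)..√(y - a), g (y - τ ^ 2) := by
  have himage : (fun τ : ℝ => y - τ ^ 2) '' Ioo 0 √(y - a) = Ioo a y := by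
    ext t
    constructor
    · rintro ⟨τ, ⟨hτ0, hτR⟩, rfl⟩
      have : τ ^ 2 < y - a := by
        simpa [sq_sqrt (sub_nonneg.2 hay)] using pow_lt_pow_left₀ hτR hτ0.le two_ne_zero
      constructor <;> nlinarith
    · rintro ⟨hat, hty⟩
      refine ⟨√(y - t),
        ⟨sqrt_pos.2 (by linarith), sqrt_lt_sqrt (by linarith) (by linarith)⟩, ?_⟩
      simp [sq_sqrt (sub_nonneg.2 hty.le)]
  have hsubst := integral_image_eq_integral_abs_deriv_smul
    (measurableSet_Ioo (a := 0) (b := √(y - a)))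
    (fun τ _ => ((hasDerivAt_pow 2 τ).const_sub y).hasDerivWithinAt)
    (fun τ hτ σ hσ h => (sq_eq_sq₀ hτ.1.le hσ.1.le).1 (sub_right_injective h))
    (fun t => g t / √(y - t))
  rw [himage] at hsubst
  rw [intervalIntegral.integral_of_le hay, integral_Ioc_eq_integral_Ioo, hsubst,
    intervalIntegral.integral_of_le (sqrt_nonneg _), integral_Ioc_eq_integral_Ioo,
    ← MeasureTheory.integral_const_mul]
  refine setIntegral_congr_fun measurableSet_Ioo fun τ hτ => ?_
  have hτ0 : 0 < τ := hτ.1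
  rw [sub_sub_cancel, sqrt_sq hτ0.le, smul_eq_mul, abs_neg, abs_of_pos (by positivity)]
  field_simp
  norm_num
  ring

def quarterDisk (R : ℝ) : Set (ℝ × ℝ) :=
  {p | 0 < p.1 ∧ 0 < p.2 ∧ p.1 ^ 2 + p.2 ^ 2 < R ^ 2}

lemma measurableSet_quarterDisk (R : ℝ) : MeasurableSet (quarterDisk R) :=
  (measurableSet_lt measurable_const measurable_fst).inter
    ((measurableSet_lt measurable_const measurable_snd).inter
      (measurableSet_lt (by fun_prop : Measurable fun p : ℝ × ℝ => p.1 ^ 2 + p.2 ^ 2)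
        measurable_const))

lemma mk_mem_quarterDisk_iff {R : ℝ} (hR : 0 ≤ R) {τ s : ℝ} :
    (τ, s) ∈ quarterDisk R ↔ τ ∈ Ioo 0 R ∧ s ∈ Ioo 0 √(R ^ 2 - τ ^ 2) := by
  simp only [quarterDisk, mem_ofPred_eq, mem_Ioo]
  constructor
  · rintro ⟨hτ, hs, hlt⟩
    exact ⟨⟨hτ, by nlinarith⟩, hs, (lt_sqrt hs.le).2 (by linarith)⟩
  · rintro ⟨⟨hτ, -⟩, hs, hlt⟩
    exact ⟨hτ, hs, by linarith [(lt_sqrt hs.le).1 hlt]⟩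

lemma quarterDisk_subset_Icc_prod_Icc (R : ℝ) : quarterDisk R ⊆ Icc 0 |R| ×ˢ Icc 0 |R| := by
  rintro ⟨τ, s⟩ ⟨hτ, hs, hlt⟩
  have hτR : τ ^ 2 < |R| ^ 2 := by rw [sq_abs]; nlinarith
  have hsR : s ^ 2 < |R| ^ 2 := by rw [sq_abs]; nlinarith
  exact ⟨⟨hτ.le, (abs_lt_of_sq_lt_sq' hτR (abs_nonneg R)).2.le⟩,
    ⟨hs.le, (abs_lt_of_sq_lt_sq' hsR (abs_nonneg R)).2.le⟩⟩

lemma setIntegral_quarterDisk {E : Type*} [NormedAddCommGroup E] [NormedSpace ℝ E]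
    {f : ℝ × ℝ → E} {R : ℝ} (hR : 0 ≤ R) (hf : IntegrableOn f (quarterDisk R)) :
    ∫ p in quarterDisk R, f p =
      ∫ τ in (0 : ℝ)..R, ∫ s in (0 : ℝ)..√(R ^ 2 - τ ^ 2), f (τ, s) := by
  have hsection : ∀ τ s, (quarterDisk R).indicator f (τ, s) =
      (Ioo 0 R).indicator
        (fun τ => (Ioo 0 √(R ^ 2 - τ ^ 2)).indicator (fun s => f (τ, s)) s) τ := by
    intro τ s
    classical
    simp only [indicator_apply, mk_mem_quarterDisk_iff hR]
    split_ifs <;> tauto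
  rw [← MeasureTheory.integral_indicator (measurableSet_quarterDisk R), Measure.volume_eq_prod,
    integral_prod _ (hf.integrable_indicator (measurableSet_quarterDisk R)),
    intervalIntegral.integral_of_le hR, integral_Ioc_eq_integral_Ioo,
    ← MeasureTheory.integral_indicator measurableSet_Ioo]
  refine integral_congr_ae (Filter.Eventually.of_forall fun τ => ?_)
  simp only [hsection]
  by_cases hτ : τ ∈ Ioo 0 R
  · simp only [indicator_of_mem hτ]
    rw [MeasureTheory.integral_indicator measurableSet_Ioo,
      intervalIntegral.integral_of_le (sqrt_nonneg _), integral_Ioc_eq_integral_Ioo]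
  · simp [indicator_of_notMem hτ]

lemma polarCoord_symm_mem_quarterDisk_iff {R : ℝ} (hR : 0 ≤ R) {p : ℝ × ℝ}
    (hp : p ∈ polarCoord.target) :
    polarCoord.symm p ∈ quarterDisk R ↔ p ∈ Ioo 0 R ×ˢ Ioo 0 (π / 2) := by
  obtain ⟨r, θ⟩ := p
  obtain ⟨hr, hθ⟩ : 0 < r ∧ θ ∈ Ioo (-π) π := by simpa using hp
  have hnorm : (r * cos θ) ^ 2 + (r * sin θ) ^ 2 = r ^ 2 := by
    linear_combination r ^ 2 * sin_sq_add_cos_sq θ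
  simp only [polarCoord_symm_apply, quarterDisk, mem_ofPred_eq, hnorm, mul_pos_iff_of_pos_left hr,
    pow_lt_pow_iff_left₀ hr.le hR two_ne_zero, mem_prod, mem_Ioo, hr, true_and]
  constructor
  · rintro ⟨hcos, hsin, hrR⟩
    have hθ0 : 0 < θ := by
      by_contra! h
      exact (sin_nonpos_of_nonpos_of_neg_pi_le h hθ.1.le).not_gt hsin
    have hθπ2 : θ < π / 2 := by
      by_contra! h
      exact (cos_nonpos_of_pi_div_two_le_of_le h (by linarith [hθ.2])).not_gt hcos
    exact ⟨hrR, hθ0, hθπ2⟩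
  · rintro ⟨hrR, hθ0, hθπ2⟩
    exact ⟨cos_pos_of_mem_Ioo ⟨by linarith, hθπ2⟩,
      sin_pos_of_pos_of_lt_pi hθ0 (by linarith), hrR⟩

lemma integral_mul_exp_neg_sq (R : ℝ) :
    ∫ r in (0 : ℝ)..R, r * exp (-r ^ 2) = (1 - exp (-R ^ 2)) / 2 := by
  have hderiv : ∀ r : ℝ, HasDerivAt (fun r => -exp (-r ^ 2) / 2) (r * exp (-r ^ 2)) r := by
    intro r
    have hsq : HasDerivAt (fun r : ℝ => -r ^ 2) (-(2 * r)) r := by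
      simpa using (hasDerivAt_pow 2 r).fun_neg
    exact (hsq.exp.fun_neg.div_const 2).congr_deriv (by ring)
  rw [integral_eq_sub_of_hasDerivAt (fun r _ => hderiv r)
    ((by fun_prop : Continuous fun r : ℝ => r * exp (-r ^ 2)).intervalIntegrable _ _)]
  simp only [ne_eq, OfNat.ofNat_ne_zero, not_false_eq_true, zero_pow, neg_zero, exp_zero]
  ring

lemma setIntegral_quarterDisk_exp_neg {R : ℝ} (hR : 0 ≤ R) :
    ∫ p in quarterDisk R, exp (-(p.1 ^ 2 + p.2 ^ 2)) = π / 4 * (1 - exp (-R ^ 2)) := by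
  have hsubset : Ioo 0 R ×ˢ Ioo 0 (π / 2) ⊆ polarCoord.target := by
    rintro ⟨r, θ⟩ ⟨⟨hr, -⟩, hθ0, hθπ2⟩
    simp only [polarCoord_target, mem_prod, mem_Ioi, mem_Ioo]
    exact ⟨hr, by linarith [pi_pos], by linarith⟩
  have hpolar : EqOn
      (fun p : ℝ × ℝ => p.1 • (quarterDisk R).indicator (fun q => exp (-(q.1 ^ 2 + q.2 ^ 2)))
        (polarCoord.symm p))
      ((Ioo 0 R ×ˢ Ioo 0 (π / 2)).indicator fun p => p.1 * exp (-p.1 ^ 2) * 1)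
      polarCoord.target := by
    intro p hp
    classical
    simp only [indicator_apply, polarCoord_symm_mem_quarterDisk_iff hR hp]
    split_ifs
    · simp only [polarCoord_symm_apply, smul_eq_mul, mul_one]
      congr 3
      linear_combination p.1 ^ 2 * sin_sq_add_cos_sq p.2
    · simp
  rw [← MeasureTheory.integral_indicator (measurableSet_quarterDisk R),
    ← integral_comp_polarCoord_symm,
    setIntegral_congr_fun polarCoord.open_target.measurableSet hpolar,
    setIntegral_indicator (measurableSet_Ioo.prod measurableSet_Ioo), inter_eq_right.2 hsubset,
    Measure.volume_eq_prod,
    setIntegral_prod_mul (fun r => r * exp (-r ^ 2)) (fun _ => (1 : ℝ)),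
    ← integral_Ioc_eq_integral_Ioo,
    ← intervalIntegral.integral_of_le hR, integral_mul_exp_neg_sq]
  simp only [MeasureTheory.integral_const, measureReal_restrict_apply_univ, volume_real_Ioo,
    sub_zero, smul_eq_mul, mul_one, max_eq_left (by positivity : (0 : ℝ) ≤ π / 2)]
  ring

lemma integral_exp_neg_sq_mul_integral_exp_neg_sq {R : ℝ} (hR : 0 ≤ R) :
    ∫ τ in (0 : ℝ)..R, exp (-τ ^ 2) * ∫ s in (0 : ℝ)..√(R ^ 2 - τ ^ 2), exp (-s ^ 2) =
      π / 4 * (1 - exp (-R ^ 2)) := by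
  have hint : IntegrableOn (fun p : ℝ × ℝ => exp (-(p.1 ^ 2 + p.2 ^ 2))) (quarterDisk R) :=
    ((by fun_prop : Continuous fun p : ℝ × ℝ => exp (-(p.1 ^ 2 + p.2 ^ 2))).continuousOn
      |>.integrableOn_compact (isCompact_Icc.prod isCompact_Icc)).mono_set
      (quarterDisk_subset_Icc_prod_Icc R)
  rw [← setIntegral_quarterDisk_exp_neg hR, setIntegral_quarterDisk hR hint]
  refine intervalIntegral.integral_congr fun τ _ => ?_
  simp only [← intervalIntegral.integral_const_mul, ← exp_add, neg_add]

lemma exp_mul_erfc_sqrt_sq_sub_sq (R τ : ℝ) :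
    exp (R ^ 2 - τ ^ 2) * erfc √(R ^ 2 - τ ^ 2) = exp (R ^ 2) * (exp (-τ ^ 2) -
      2 / √π * (exp (-τ ^ 2) * ∫ s in (0 : ℝ)..√(R ^ 2 - τ ^ 2), exp (-s ^ 2))) := by
  rw [erfc_eq_one_sub_integral, sub_eq_add_neg (R ^ 2), exp_add]
  ring

lemma halfIntegral_exp_mul_erfc_sqrt {y : ℝ} (hy : -1 ≤ y) :
    (1 / √π) * ∫ t in (-1 : ℝ)..y, exp (1 + t) * erfc √(1 + t) / √(y - t) =
      1 - exp (1 + y) * erfc √(1 + y) := by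
  set R := √(1 + y) with hR
  have hR0 : 0 ≤ R := sqrt_nonneg _
  have hR2 : R ^ 2 = 1 + y := sq_sqrt (by linarith)
  have hshift : ∀ τ : ℝ, 1 + (y - τ ^ 2) = R ^ 2 - τ ^ 2 := fun τ => by rw [hR2]; ring
  have hgauss : ∫ τ in (0 : ℝ)..R, exp (-τ ^ 2) = √π / 2 * (1 - erfc R) := by
    rw [erfc_eq_one_sub_integral]
    field_simp
    ring
  have hcont : Continuous fun τ : ℝ =>
      exp (-τ ^ 2) * ∫ s in (0 : ℝ)..√(R ^ 2 - τ ^ 2), exp (-s ^ 2) :=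
    (by fun_prop : Continuous fun τ : ℝ => exp (-τ ^ 2)).mul
      (continuous_integral_exp_neg_sq.comp (by fun_prop))
  rw [integral_div_sqrt_sub_eq _ hy, sub_neg_eq_add, add_comm y, ← hR]
  simp only [hshift, exp_mul_erfc_sqrt_sq_sub_sq]
  rw [intervalIntegral.integral_const_mul, intervalIntegral.integral_sub
      ((by fun_prop : Continuous fun τ : ℝ => exp (-τ ^ 2)).intervalIntegrable _ _)
      ((hcont.intervalIntegrable _ _).const_mul _),
    intervalIntegral.integral_const_mul, hgauss, integral_exp_neg_sq_mul_integral_exp_neg_sq hR0,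
    ← hR2]
  have hπ : √π ^ 2 = π := sq_sqrt pi_pos.le
  have hexp : exp (R ^ 2) * exp (-R ^ 2) = 1 := by rw [← exp_add, add_neg_cancel, exp_zero]
  field_simp
  linear_combination (4 * exp (R ^ 2) - 4) * hπ + 4 * π * hexp

lemma hasDerivAt_exp_mul_erfc_sqrt {a : ℝ} (ha : 0 < a) :
    HasDerivAt (fun a => exp a * erfc √a) (exp a * erfc √a - 1 / (√π * √a)) a := by
  have hsqrt : HasDerivAt (fun a => √a) (1 / (2 * √a)) a := hasDerivAt_sqrt ha.ne'
  refine ((hasDerivAt_exp a).mul ((hasDerivAt_erfc √a).comp a hsqrt)).congr_deriv ?_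
  have hexp : exp a * exp (-√a ^ 2) = 1 := by
    rw [sq_sqrt ha.le, ← exp_add, add_neg_cancel, exp_zero]
  have hπ : √π ≠ 0 := (sqrt_pos.2 pi_pos).ne'
  have hsa : √a ≠ 0 := (sqrt_pos.2 ha).ne'
  simp only [Function.comp_apply]
  field_simp
  linear_combination -hexp

theorem stmt16 (x : ℝ) (hx : x ∈ Set.Ioo (-1 : ℝ) 1) :
    HasDerivAt
      (fun y => (1 / Real.sqrt π) *
        ∫ t in (-1 : ℝ)..y, Real.exp (1 + t) * erfc (Real.sqrt (1 + t)) / Real.sqrt (y - t))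
      (1 / (Real.sqrt π * Real.sqrt (1 + x))
        - Real.exp (1 + x) * erfc (Real.sqrt (1 + x))) x := by
  have hclosed : HasDerivAt (fun y => 1 - exp (1 + y) * erfc √(1 + y))
      (1 / (√π * √(1 + x)) - exp (1 + x) * erfc √(1 + x)) x := by
    have h := (hasDerivAt_exp_mul_erfc_sqrt (by linarith [hx.1] : 0 < 1 + x)).comp_const_add 1 x
    exact (h.const_sub 1).congr_deriv (by ring)
  refine hclosed.congr_of_eventuallyEq ?_
  filter_upwards [Ioi_mem_nhds hx.1] with y hy
  exact halfIntegral_exp_mul_erfc_sqrt (le_of_lt hy)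
end
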